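/- arXiv:2510.22404 — 3 statements merged into one kernel-verified Lean document; each statement's English description precedes it below -/
import Mathlib

section
/- If W is a compressed text representation of a k-mer multiset M (puff(W) = M), then the compression ratio weight(M)/weight(W) satisfies weight(M)/weight(W) ≤ k + 1 − k²/(|M| + k − 1), and in particular is strictly less than k + 1. -/
/-!
Each word `w ∈ W` contributes `|w| + 1 - k` k-mers to `M`, so `Σ |w| + |W| = |M| + k |W|` and
`weight(W) = |M| + k|W| - 1 ≥ |M| + k - 1`. Since `(k+1)|M| - 1 = (k+1)(|M| + k - 1) - k²`, dividing
by `|M| + k - 1` instead of `weight(W)` gives exactly `k + 1 - k²/(|M| + k - 1)`.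
-/

/-- The multiset of contiguous length-`k` substrings (`k`-mers) of a word. -/
def puff {α : Type} (k : ℕ) (w : List α) : Multiset (List α) :=
  (((List.range (w.length + 1 - k)).map fun i => (w.drop i).take k) : List (List α))

/-- The `k`-mer multiset represented by a multiset of words (multiset union). -/
def puffW {α : Type} (k : ℕ) (W : Multiset (List α)) : Multiset (List α) :=
  (W.map (puff k)).sum

/-- The weight of a multiset of words: total length plus `|W| − 1` separators. -/
def weight {α : Type} (W : Multiset (List α)) : ℕ :=
  (W.map List.length).sum + Multiset.card W - 1

section Puff

variable {α : Type} (k : ℕ)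

theorem card_puff (w : List α) : Multiset.card (puff k w) = w.length + 1 - k := by
  simp [puff]

theorem puffW_zero : puffW k (0 : Multiset (List α)) = 0 := by
  simp [puffW]

theorem card_puffW (W : Multiset (List α)) :
    Multiset.card (puffW k W) = (W.map fun w => w.length + 1 - k).sum := by
  rw [puffW, ← Multiset.join, Multiset.card_join, Multiset.map_map]
  exact congrArg _ (Multiset.map_congr rfl fun w _ => card_puff k w)

variable {k} {W : Multiset (List α)}

theorem sum_length_add_card_eq (hlen : ∀ w ∈ W, k ≤ w.length) :
    (W.map List.length).sum + Multiset.card W = Multiset.card (puffW k W) + k * Multiset.card W := by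
  have hword : ∀ w ∈ W, w.length + 1 = (w.length + 1 - k) + k := fun w hw => by
    have := hlen w hw; omega
  calc (W.map List.length).sum + Multiset.card W = (W.map fun w => w.length + 1).sum := by
        simp [Multiset.sum_map_add]
    _ = (W.map fun w => (w.length + 1 - k) + k).sum := congrArg _ (Multiset.map_congr rfl hword)
    _ = Multiset.card (puffW k W) + k * Multiset.card W := by
        simp [Multiset.sum_map_add, card_puffW, mul_comm]

theorem weight_eq (hlen : ∀ w ∈ W, k ≤ w.length) :
    weight W = Multiset.card (puffW k W) + k * Multiset.card W - 1 := by
  rw [weight, sum_length_add_card_eq hlen]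

theorem card_puffW_add_le_weight (hlen : ∀ w ∈ W, k ≤ w.length) (hW : W ≠ 0) :
    Multiset.card (puffW k W) + k - 1 ≤ weight W := by
  have hk : k ≤ k * Multiset.card W := Nat.le_mul_of_pos_right k (Multiset.card_pos.mpr hW)
  rw [weight_eq hlen]
  omega

end Puff

section Ratio

variable {K : Type*} [Field K] [LinearOrder K] [IsStrictOrderedRing K]

theorem add_one_mul_sub_one_div_le {m k D : K} (hm : 1 ≤ m) (hk : 0 < k) (hD : m + k - 1 ≤ D) :
    ((k + 1) * m - 1) / D ≤ k + 1 - k ^ 2 / (m + k - 1) := by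
  have hpos : 0 < m + k - 1 := by linarith
  calc ((k + 1) * m - 1) / D ≤ ((k + 1) * m - 1) / (m + k - 1) :=
        div_le_div_of_nonneg_left (by nlinarith) hpos hD
    _ = k + 1 - k ^ 2 / (m + k - 1) := by field_simp; ring

end Ratio

theorem compression_ratio_lt_general {α : Type} (k : ℕ) (hk : 1 ≤ k)
    (M W : Multiset (List α)) (hM : M ≠ 0)
    (hlen : ∀ w ∈ W, k ≤ w.length) (h : puffW k W = M) :
    (((k : ℚ) + 1) * (Multiset.card M : ℚ) - 1) / (weight W : ℚ) ≤
        (k : ℚ) + 1 - (k : ℚ) ^ 2 / ((Multiset.card M : ℚ) + (k : ℚ) - 1) ∧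
      (((k : ℚ) + 1) * (Multiset.card M : ℚ) - 1) / (weight W : ℚ) < (k : ℚ) + 1 := by
  subst h
  have hW : W ≠ 0 := by rintro rfl; exact hM (puffW_zero k)
  have hm : (1 : ℚ) ≤ Multiset.card (puffW k W) := by exact_mod_cast Multiset.card_pos.mpr hM
  have hkQ : (1 : ℚ) ≤ k := by exact_mod_cast hk
  have hD : (Multiset.card (puffW k W) : ℚ) + k - 1 ≤ weight W := by
    have hle := card_puffW_add_le_weight hlen hW
    rw [← Nat.cast_le (α := ℚ), Nat.cast_sub (by omega)] at hle
    push_cast at hle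
    exact hle
  have hle := add_one_mul_sub_one_div_le hm (by linarith) hD
  refine ⟨hle, hle.trans_lt (sub_lt_self _ ?_)⟩
  exact div_pos (by positivity) (by linarith)

/-- If `W` is a compressed text representation of a nonempty `k`-mer multiset `M`
(`puff(W) = M`, all words of length ≥ `k`), then the compression ratio
`weight(M)/weight(W) = ((k+1)|M| − 1)/weight(W)` is at most
`k + 1 − k²/(|M| + k − 1)`, and in particular strictly less than `k + 1`. -/
theorem compression_ratio_lt {α : Type} (k : ℕ) (hk : 1 ≤ k)
    (M W : Multiset (List α)) (hM : M ≠ 0) (hMk : ∀ m ∈ M, m.length = k)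
    (hlen : ∀ w ∈ W, k ≤ w.length) (h : puffW k W = M) :
    (((k : ℚ) + 1) * (Multiset.card M : ℚ) - 1) / (weight W : ℚ) ≤
        (k : ℚ) + 1 - (k : ℚ) ^ 2 / ((Multiset.card M : ℚ) + (k : ℚ) - 1) ∧
      (((k : ℚ) + 1) * (Multiset.card M : ℚ) - 1) / (weight W : ℚ) < (k : ℚ) + 1 :=
  compression_ratio_lt_general k hk M W hM hlen h
end

section
/- The Burrows-Wheeler Transform is injective on strings ending with a unique terminal symbol: if two strings s and t each end with a sentinel character $ that occurs nowhere else in them, and BWT(s) = BWT(t), then s = t. -/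
/-!
Write `M w` for the rotations of `w` sorted lexicographically, so that `bwt w` is its last column.
Rotating every row one step to the left permutes the rows, and the first `j + 1` letters of a row
`r` are the last letter of `r.rotate 1` followed by the first `j` letters of `r.rotate 1`. Hence
prepending the last column to the first `j` columns of `M w` and sorting the rows gives the first
`j + 1` columns, and by induction `bwt w` determines `M w`. So `bwt s = bwt t` makes `s` a
rotation of `t`, and a rotation that keeps the unique occurrence of the sentinel at the end is
trivial.
-/

/-- All cyclic rotations of a word. -/
def rotations {α : Type} (w : List α) : List (List α) :=
  (List.range w.length).map fun i => w.rotate i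

/-- The Burrows–Wheeler transform: sort all cyclic rotations lexicographically and take
the last character of each rotation in sorted order. -/
def bwt {α : Type} [LinearOrder α] (w : List α) : List (Option α) :=
  ((rotations w).insertionSort (· ≤ ·)).map List.getLast?

namespace List

variable {α : Type*}

theorem Lex.of_take {r : α → α → Prop} :
    ∀ {n : ℕ} {l₁ l₂ : List α}, Lex r (l₁.take n) (l₂.take n) → Lex r l₁ l₂
  | 0, _, _, h => by simp at h
  | _ + 1, _, [], h => by simp at h
  | _ + 1, [], _ :: _, _ => .nil
  | _ + 1, _ :: _, _ :: _, h => by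
    rw [take_succ_cons, take_succ_cons] at h
    cases h with
    | cons h => exact .cons h.of_take
    | rel h => exact .rel h

theorem take_le_take_of_le [LinearOrder α] {l₁ l₂ : List α} (h : l₁ ≤ l₂) (n : ℕ) :
    l₁.take n ≤ l₂.take n :=
  not_lt.1 fun hlt => not_lt.2 h (Lex.of_take hlt)

theorem take_succ_eq_getLast?_rotate_one_append {l : List α} {n : ℕ} (hn : n < l.length) :
    l.take (n + 1) = (l.rotate 1).getLast?.toList ++ (l.rotate 1).take n := by
  cases l with
  | nil => simp at hn
  | cons a l =>
    rw [rotate_cons_succ, rotate_zero, take_append_of_le_length (by simpa using hn)]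
    simp

theorem rotate_eq_self_of_getLast?_rotate [DecidableEq α] {l : List α} {d : α} {k : ℕ}
    (hl : l.getLast? = some d) (hd : l.count d = 1) (h : (l.rotate k).getLast? = some d) :
    l.rotate k = l := by
  obtain ⟨u, rfl⟩ := getLast?_eq_some_iff.1 hl
  have hdu : d ∉ u := by
    rw [← count_eq_zero]
    simpa using hd
  have hk : k % (u ++ [d]).length ≤ u.length := by
    simpa [Nat.lt_succ_iff] using Nat.mod_lt k (length_pos_of_ne_nil (l := u ++ [d]) (by simp))
  rw [← rotate_mod] at h ⊢
  generalize k % (u ++ [d]).length = k at hk h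
  rcases Nat.eq_zero_or_pos k with rfl | hpos
  · exact rotate_zero _
  · exfalso
    have hne : u.take k ≠ [] := ne_nil_of_length_pos (by simp; omega)
    rw [rotate_eq_drop_append_take (by simp; omega), take_append_of_le_length hk,
      getLast?_append_of_ne_nil _ hne] at h
    exact hdu (take_subset k u (mem_of_getLast? h))

end List

open List

section
variable {α : Type}

theorem rotations_eq_cyclicPermutations {w : List α} (hw : w ≠ []) :
    rotations w = w.cyclicPermutations :=
  ext_getElem (by simp [rotations, hw]) fun n _ _ => by simp [rotations]

theorem mem_rotations_iff {w r : List α} (hw : w ≠ []) : r ∈ rotations w ↔ r ~r w := by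
  rw [rotations_eq_cyclicPermutations hw, mem_cyclicPermutations_iff]

theorem length_of_mem_rotations {w r : List α} (h : r ∈ rotations w) : r.length = w.length := by
  obtain ⟨i, -, rfl⟩ := mem_map.1 h
  exact length_rotate _ _

theorem rotations_rotate (w : List α) (k : ℕ) :
    rotations (w.rotate k) = (rotations w).rotate k := by
  rcases eq_or_ne w [] with rfl | hw
  · simp [rotations]
  rw [rotations_eq_cyclicPermutations hw,
    rotations_eq_cyclicPermutations (rotate_eq_nil_iff.not.2 hw),
    cyclicPermutations_rotate]

theorem map_rotate_rotations (w : List α) (k : ℕ) :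
    (rotations w).map (·.rotate k) = rotations (w.rotate k) := by
  simp only [rotations, map_map, length_rotate, rotate_rotate, Function.comp_def, Nat.add_comm]

section
variable [LinearOrder α]

def sortedRotations (w : List α) : List (List α) :=
  (rotations w).insertionSort (· ≤ ·)

theorem sortedRotations_perm (w : List α) : (sortedRotations w).Perm (rotations w) :=
  perm_insertionSort _ _

theorem bwt_eq_map_getLast? (w : List α) : bwt w = (sortedRotations w).map List.getLast? := rfl

theorem length_bwt (w : List α) : (bwt w).length = w.length := by
  simp [bwt, rotations]

theorem pairwise_map_take_sortedRotations (w : List α) (n : ℕ) :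
    ((sortedRotations w).map (·.take n)).Pairwise (· ≤ ·) :=
  (pairwise_insertionSort _ _).map _ fun _ _ h => take_le_take_of_le h n

theorem map_take_sortedRotations_of_length_le {w : List α} {n : ℕ} (hn : w.length ≤ n) :
    (sortedRotations w).map (·.take n) = sortedRotations w :=
  (map_congr_left fun _ hr => take_of_length_le <|
    (length_of_mem_rotations ((sortedRotations_perm w).subset hr)).trans_le hn).trans
    (map_id _)

theorem map_take_succ_sortedRotations {w : List α} {n : ℕ} (hn : n < w.length) :
    (sortedRotations w).map (·.take (n + 1)) =
      ((bwt w).zipWith (fun c r => c.toList ++ r)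
        ((sortedRotations w).map (·.take n))).insertionSort (· ≤ ·) := by
  set f : List α → List α := fun r => r.getLast?.toList ++ r.take n
  have hzip : (bwt w).zipWith (fun c r => c.toList ++ r) ((sortedRotations w).map (·.take n)) =
      (sortedRotations w).map f := by
    rw [bwt_eq_map_getLast?, zipWith_map, zipWith_self]
  refine Perm.eq_of_pairwise' (pairwise_map_take_sortedRotations w _)
    (pairwise_insertionSort _ _) ?_
  have hshift : (rotations w).map (·.take (n + 1)) = ((rotations w).map (·.rotate 1)).map f := by
    rw [map_map]
    refine map_congr_left fun r hr => ?_
    exact take_succ_eq_getLast?_rotate_one_append (length_of_mem_rotations hr ▸ hn)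
  calc (sortedRotations w).map (·.take (n + 1))
      _ ~ (rotations w).map (·.take (n + 1)) := (sortedRotations_perm w).map _
      _ = (rotations (w.rotate 1)).map f := by rw [hshift, map_rotate_rotations]
      _ ~ (rotations w).map f := by rw [rotations_rotate]; exact (rotate_perm _ _).map f
      _ ~ (sortedRotations w).map f := ((sortedRotations_perm w).map f).symm
      _ = _ := hzip.symm
      _ ~ _ := (perm_insertionSort _ _).symm

theorem sortedRotations_eq_of_bwt_eq {s t : List α} (h : bwt s = bwt t) :
    sortedRotations s = sortedRotations t := by
  have hlen : s.length = t.length := by simpa only [length_bwt] using congrArg length h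
  have hcol : ∀ n ≤ s.length,
      (sortedRotations s).map (·.take n) = (sortedRotations t).map (·.take n) := by
    intro n hn
    induction n with
    | zero => simp [sortedRotations, map_const', rotations, hlen]
    | succ n ih =>
      rw [map_take_succ_sortedRotations (by omega), map_take_succ_sortedRotations (by omega),
        ih (by omega), h]
  rw [← map_take_sortedRotations_of_length_le le_rfl,
    ← map_take_sortedRotations_of_length_le hlen.ge, hcol _ le_rfl]

theorem mem_rotations_of_bwt_eq {s t : List α} (hs : s ≠ []) (h : bwt s = bwt t) :
    s ∈ rotations t := by
  rw [← (sortedRotations_perm t).mem_iff, ← sortedRotations_eq_of_bwt_eq h,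
    (sortedRotations_perm s).mem_iff, mem_rotations_iff hs]

end

end

theorem bwt_injective_sentinel_general {α : Type} [LinearOrder α] (d : α) (s t : List α)
    (hs : s.getLast? = some d) (ht : t.getLast? = some d)
    (ht1 : t.count d = 1)
    (h : bwt s = bwt t) : s = t := by
  have hs_ne : s ≠ [] := by rintro rfl; simp at hs
  have ht_ne : t ≠ [] := by rintro rfl; simp at ht
  obtain ⟨k, rfl⟩ := ((mem_rotations_iff ht_ne).1 (mem_rotations_of_bwt_eq hs_ne h)).symm
  exact rotate_eq_self_of_getLast?_rotate ht ht1 hs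

/-- The Burrows–Wheeler transform is injective on strings ending with a unique sentinel
symbol `d` that is strictly smaller than every other symbol and occurs exactly once, as
the last character: if `BWT(s) = BWT(t)` then `s = t`. -/
theorem bwt_injective_sentinel {α : Type} [LinearOrder α] (d : α) (s t : List α)
    (hs : s.getLast? = some d) (ht : t.getLast? = some d)
    (hs1 : s.count d = 1) (ht1 : t.count d = 1)
    (hsd : ∀ a ∈ s, a ≠ d → d < a) (htd : ∀ a ∈ t, a ≠ d → d < a)
    (h : bwt s = bwt t) : s = t :=
  bwt_injective_sentinel_general d s t hs ht ht1 h
end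

section
/- In a connected balanced directed multigraph with at least one edge, Hierholzer's approach succeeds: starting from any vertex, every maximal trail that cannot be extended ends at its starting vertex, and any closed trail that does not use all edges can be extended by splicing in a closed trail through a vertex of the trail incident to an unused edge; hence an Eulerian circuit exists. -/
/-! Along a trail every passage through a vertex enters and leaves it, so in a balanced edge set a
trail that cannot be continued must end where it started. The edges not used by a closed trail again
form a balanced set; by connectivity one of them leaves a vertex of the trail, a maximal trail of
unused edges from there is closed, and it can be spliced into the trail after rotating the trail to
start at that vertex. Repeating this until no edge is left produces an Eulerian circuit. -/

/-- A finite directed multigraph: edges carry a source and a target vertex;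
parallel edges are allowed since `E` is an arbitrary edge type. -/
structure DiMultigraph (V E : Type) where
  src : E → V
  tgt : E → V

namespace DiMultigraph

variable {V E : Type} (G : DiMultigraph V E)

/-- Out-degree of a vertex. -/
def outDeg [Fintype E] [DecidableEq V] (v : V) : ℕ :=
  (Finset.univ.filter fun e => G.src e = v).card

/-- In-degree of a vertex. -/
def inDeg [Fintype E] [DecidableEq V] (v : V) : ℕ :=
  (Finset.univ.filter fun e => G.tgt e = v).card

/-- A trail: a list of pairwise distinct edges, consecutively compatible. -/
def IsTrail (es : List E) : Prop :=
  es.Nodup ∧ es.Chain' fun e f => G.tgt e = G.src f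

/-- A closed trail (circuit): the target of the last edge is the source of the first. -/
def IsClosed (es : List E) : Prop :=
  ∀ h : es ≠ [], G.tgt (es.getLast h) = G.src (es.head h)

/-- Adjacency in the underlying undirected multigraph. -/
def Adj (v w : V) : Prop :=
  ∃ e : E, (G.src e = v ∧ G.tgt e = w) ∨ (G.src e = w ∧ G.tgt e = v)

/-- Reachability in the underlying undirected multigraph. -/
def Reach : V → V → Prop := Relation.ReflTransGen G.Adj

/-- Two edges lie in the same connected component of the underlying graph. -/
def SameComp (e f : E) : Prop := G.Reach (G.src e) (G.src f)

end DiMultigraph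

theorem Relation.ReflTransGen.exists_crossing {α : Type*} {r : α → α → Prop} {P : α → Prop}
    {a b : α} (h : Relation.ReflTransGen r a b) (ha : P a) (hb : ¬P b) :
    ∃ x y, r x y ∧ P x ∧ ¬P y := by
  induction h with
  | refl => exact absurd ha hb
  | @tail c d _ hcd ih =>
    by_cases hc : P c
    · exact ⟨c, d, hcd, hc, hb⟩
    · exact ih hc

namespace DiMultigraph

open Finset

variable {V E : Type} {G : DiMultigraph V E}

theorem isClosed_iff {l : List E} :
    G.IsClosed l ↔ ∀ x ∈ l.getLast?, ∀ y ∈ l.head?, G.tgt x = G.src y := by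
  rcases eq_or_ne l [] with rfl | hne
  · simp [IsClosed]
  · simp [IsClosed, List.getLast?_eq_some_getLast hne, List.head?_eq_some_head hne, hne]

theorem isTrail_nil : G.IsTrail [] :=
  ⟨List.nodup_nil, List.isChain_nil⟩

theorem isTrail_singleton (e : E) : G.IsTrail [e] :=
  ⟨List.nodup_singleton e, List.isChain_singleton e⟩

theorem IsTrail.concat {l : List E} (hl : G.IsTrail l) (hne : l ≠ []) {e : E} (he : e ∉ l)
    (hsrc : G.src e = G.tgt (l.getLast hne)) : G.IsTrail (l ++ [e]) := by
  refine ⟨hl.1.append (List.nodup_singleton e) (by simpa using he), hl.2.append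
    (List.isChain_singleton e) ?_⟩
  simp only [List.getLast?_eq_some_getLast hne, List.head?_cons, Option.mem_some_iff]
  rintro _ rfl _ rfl
  exact hsrc.symm

theorem IsTrail.length_le_card {S : Finset E} {l : List E} (hl : G.IsTrail l)
    (hlS : ∀ e ∈ l, e ∈ S) : l.length ≤ #S := by
  classical
  rw [← List.toFinset_card_of_nodup hl.1]
  exact card_le_card fun e he ↦ hlS e (List.mem_toFinset.1 he)

theorem IsTrail.exists_maximal_extension {S : Finset E} {l : List E} (hl : G.IsTrail l)
    (hlS : ∀ e ∈ l, e ∈ S) (hne : l ≠ []) :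
    ∃ (m : List E) (hm : m ≠ []), l <+: m ∧ G.IsTrail m ∧ (∀ e ∈ m, e ∈ S) ∧
      ∀ e ∈ S, e ∉ m → G.src e ≠ G.tgt (m.getLast hm) := by
  by_cases hext : ∃ e ∈ S, e ∉ l ∧ G.src e = G.tgt (l.getLast hne)
  · obtain ⟨e, heS, hel, hsrc⟩ := hext
    have hlS' : ∀ f ∈ l ++ [e], f ∈ S := by simpa [or_imp, forall_and] using ⟨hlS, heS⟩
    obtain ⟨m, hm, hpre, hmax⟩ :=
      (hl.concat hne hel hsrc).exists_maximal_extension hlS' (by simp)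
    exact ⟨m, hm, (List.prefix_append l [e]).trans hpre, hmax⟩
  · push Not at hext
    exact ⟨l, hne, List.prefix_refl l, hl, hlS, hext⟩
termination_by #S - l.length
decreasing_by
  have := (hl.concat hne hel hsrc).length_le_card hlS'
  simp only [List.length_append, List.length_singleton] at this ⊢
  omega

theorem IsTrail.rotate_of_isClosed {l₁ l₂ : List E} (hl : G.IsTrail (l₁ ++ l₂))
    (hc : G.IsClosed (l₁ ++ l₂)) : G.IsTrail (l₂ ++ l₁) ∧ G.IsClosed (l₂ ++ l₁) := by
  rcases eq_or_ne l₁ [] with rfl | h₁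
  · simpa using ⟨hl, hc⟩
  rcases eq_or_ne l₂ [] with rfl | h₂
  · simp only [List.append_nil, List.nil_append] at hl hc ⊢
    exact ⟨hl, hc⟩
  obtain ⟨hch₁, hch₂, hjoin⟩ := List.isChain_append.1 hl.2
  rw [isClosed_iff, List.getLast?_append_of_ne_nil _ h₂, List.head?_append_of_ne_nil _ h₁] at hc
  refine ⟨⟨List.nodup_append_comm.1 hl.1, hch₂.append hch₁ hc⟩, ?_⟩
  rwa [isClosed_iff, List.getLast?_append_of_ne_nil _ h₁, List.head?_append_of_ne_nil _ h₂]

theorem IsTrail.append_of_isClosed {l₁ l₂ : List E} (h₁ : G.IsTrail l₁) (hc₁ : G.IsClosed l₁)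
    (h₂ : G.IsTrail l₂) (hc₂ : G.IsClosed l₂) (hdisj : l₁.Disjoint l₂) (hne₁ : l₁ ≠ [])
    (hne₂ : l₂ ≠ []) (hsrc : G.src (l₁.head hne₁) = G.src (l₂.head hne₂)) :
    G.IsTrail (l₁ ++ l₂) ∧ G.IsClosed (l₁ ++ l₂) := by
  refine ⟨⟨h₁.1.append h₂.1 hdisj, h₁.2.append h₂.2 ?_⟩, ?_⟩
  · simp only [List.getLast?_eq_some_getLast hne₁, List.head?_eq_some_head hne₂,
      Option.mem_some_iff]
    rintro _ rfl _ rfl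
    rw [hc₁ hne₁, hsrc]
  · rw [isClosed_iff, List.getLast?_append_of_ne_nil _ hne₂, List.head?_append_of_ne_nil _ hne₁,
      List.getLast?_eq_some_getLast hne₂, List.head?_eq_some_head hne₁]
    simp only [Option.mem_some_iff]
    rintro _ rfl _ rfl
    rw [hc₂ hne₂, hsrc]

section Degrees

variable [DecidableEq V]

variable (G) in
def outDegOn (S : Finset E) (v : V) : ℕ := #{e ∈ S | G.src e = v}

variable (G) in
def inDegOn (S : Finset E) (v : V) : ℕ := #{e ∈ S | G.tgt e = v}

variable (G) in
def IsBalancedOn (S : Finset E) : Prop := ∀ v, G.inDegOn S v = G.outDegOn S v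

theorem isBalancedOn_univ [Fintype E] (hbal : ∀ v, G.inDeg v = G.outDeg v) :
    G.IsBalancedOn univ :=
  hbal

theorem IsBalancedOn.exists_src_eq_tgt {S : Finset E} (hS : G.IsBalancedOn S) {e : E}
    (he : e ∈ S) : ∃ f ∈ S, G.src f = G.tgt e := by
  have hin : 0 < G.inDegOn S (G.tgt e) := card_pos.2 ⟨e, mem_filter.2 ⟨he, rfl⟩⟩
  obtain ⟨f, hf⟩ := card_pos.1 (hS (G.tgt e) ▸ hin)
  exact ⟨f, mem_filter.1 hf⟩

theorem IsBalancedOn.sdiff [DecidableEq E] {S T : Finset E} (hS : G.IsBalancedOn S)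
    (hT : G.IsBalancedOn T) (hTS : T ⊆ S) : G.IsBalancedOn (S \ T) := by
  have hcard (p : E → Prop) [DecidablePred p] :
      #{e ∈ S \ T | p e} = #{e ∈ S | p e} - #{e ∈ T | p e} := by
    rw [← card_sdiff_of_subset (filter_subset_filter _ hTS)]
    congr 1
    ext e
    simp only [mem_filter, mem_sdiff]
    tauto
  intro v
  simp only [inDegOn, outDegOn, hcard]
  exact congrArg₂ _ (hS v) (hT v)

theorem IsTrail.inDegOn_add_eq [DecidableEq E] {l : List E} (hl : G.IsTrail l) (hne : l ≠ [])
    (v : V) :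
    G.inDegOn l.toFinset v + (if G.src (l.head hne) = v then 1 else 0) =
      G.outDegOn l.toFinset v + (if G.tgt (l.getLast hne) = v then 1 else 0) := by
  induction l with
  | nil => exact absurd rfl hne
  | cons a l ih =>
    rcases l with _ | ⟨b, l⟩
    · simp only [inDegOn, outDegOn, List.toFinset_cons, List.toFinset_nil, insert_empty,
        filter_singleton, List.head_cons, List.getLast_singleton]
      split_ifs <;> simp_all
    · obtain ⟨hnd, hch⟩ := hl
      obtain ⟨ha, hnd⟩ := List.nodup_cons.1 hnd
      obtain ⟨hab, hch⟩ := List.isChain_cons_cons.1 hch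
      have := ih ⟨hnd, hch⟩ (List.cons_ne_nil _ _)
      simp only [inDegOn, outDegOn, List.toFinset_cons (a := a), filter_insert,
        List.head_cons, List.getLast_cons (List.cons_ne_nil b l)] at this ⊢
      rw [hab] at *
      split_ifs at this ⊢ <;> simp_all [card_insert_of_notMem]
      all_goals omega

theorem IsTrail.isBalancedOn_toFinset [DecidableEq E] {l : List E} (hl : G.IsTrail l)
    (hc : G.IsClosed l) : G.IsBalancedOn l.toFinset := by
  intro v
  rcases eq_or_ne l [] with rfl | hne
  · simp [inDegOn, outDegOn]
  · have := hl.inDegOn_add_eq hne v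
    rw [hc hne] at this
    omega

theorem IsTrail.tgt_getLast_eq_src_head_of_maximal {S : Finset E}
    (hS : G.IsBalancedOn S) {l : List E} (hl : G.IsTrail l) (hlS : ∀ e ∈ l, e ∈ S)
    (hne : l ≠ []) (hmax : ∀ e ∈ S, e ∉ l → G.src e ≠ G.tgt (l.getLast hne)) :
    G.tgt (l.getLast hne) = G.src (l.head hne) := by
  classical
  by_contra hopen
  set w := G.tgt (l.getLast hne)
  have hflow := hl.inDegOn_add_eq hne w
  rw [if_neg (Ne.symm hopen), if_pos rfl] at hflow
  have hin : G.inDegOn l.toFinset w ≤ G.inDegOn S w :=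
    card_le_card (filter_subset_filter _ fun e he ↦ hlS e (List.mem_toFinset.1 he))
  have hout : G.outDegOn S w ≤ G.outDegOn l.toFinset w := by
    refine card_le_card fun e he ↦ ?_
    obtain ⟨heS, hew⟩ := mem_filter.1 he
    refine mem_filter.2 ⟨List.mem_toFinset.2 ?_, hew⟩
    by_contra hel
    exact hmax e heS hel hew
  have := hS w
  omega

theorem IsTrail.exists_unused_edge_leaving [Fintype E] [DecidableEq E]
    (hconn : ∀ v w, G.Reach v w) {es : List E} (hes : G.IsTrail es) (hc : G.IsClosed es)
    (hne : es ≠ []) (hS : G.IsBalancedOn (univ \ es.toFinset)) (hmiss : ∃ f, f ∉ es) :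
    ∃ e ∈ es, ∃ g ∉ es, G.src g = G.src e := by
  set P : V → Prop := fun v ↦ ∃ e ∈ es, G.src e = v
  have hP_tgt : ∀ e ∈ es, P (G.tgt e) := fun e he ↦ by
    obtain ⟨f, hf, hfe⟩ :=
      (hes.isBalancedOn_toFinset hc).exists_src_eq_tgt (List.mem_toFinset.2 he)
    exact ⟨f, List.mem_toFinset.1 hf, hfe⟩
  have hincident : ∃ g ∉ es, P (G.src g) ∨ P (G.tgt g) := by
    obtain ⟨f, hf⟩ := hmiss
    by_cases hPf : P (G.src f)
    · exact ⟨f, hf, Or.inl hPf⟩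
    obtain ⟨x, y, ⟨g, hg⟩, hx, hy⟩ :=
      (hconn _ (G.src f)).exists_crossing ⟨_, List.head_mem hne, rfl⟩ hPf
    have hges : g ∉ es := fun hges ↦ hy <| by
      rcases hg with ⟨-, rfl⟩ | ⟨rfl, -⟩
      exacts [hP_tgt g hges, ⟨g, hges, rfl⟩]
    rcases hg with ⟨rfl, -⟩ | ⟨-, rfl⟩
    exacts [⟨g, hges, Or.inl hx⟩, ⟨g, hges, Or.inr hx⟩]
  obtain ⟨g, hg, ⟨e, he, hsrc⟩ | ⟨e, he, htgt⟩⟩ := hincident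
  · exact ⟨e, he, g, hg, hsrc.symm⟩
  -- an unused edge entering the trail forces an unused edge leaving it, the unused edges being
  -- balanced
  · obtain ⟨g', hg'S, hg'⟩ := hS.exists_src_eq_tgt (e := g) (by simpa using hg)
    exact ⟨e, he, g', by simpa using hg'S, hg'.trans htgt.symm⟩

theorem IsTrail.exists_longer_of_isClosed [Fintype E] (hbal : ∀ v, G.inDeg v = G.outDeg v)
    (hconn : ∀ v w, G.Reach v w) {es : List E} (hes : G.IsTrail es) (hc : G.IsClosed es)
    (hne : es ≠ []) (hmiss : ∃ f, f ∉ es) :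
    ∃ es' : List E, G.IsTrail es' ∧ G.IsClosed es' ∧ (∀ e ∈ es, e ∈ es') ∧
      es.length < es'.length := by
  classical
  have hS : G.IsBalancedOn (univ \ es.toFinset) :=
    (isBalancedOn_univ hbal).sdiff (hes.isBalancedOn_toFinset hc) (subset_univ _)
  obtain ⟨e, he, g, hg, hsrc⟩ := hes.exists_unused_edge_leaving hconn hc hne hS hmiss
  obtain ⟨cs, hcsne, hpre, hcs, hcsS, hmax⟩ :=
    (isTrail_singleton g).exists_maximal_extension (S := univ \ es.toFinset)
      (by simpa using hg) (List.cons_ne_nil g [])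
  have hcsc : G.IsClosed cs := fun _ ↦ hcs.tgt_getLast_eq_src_head_of_maximal hS hcsS hcsne hmax
  obtain ⟨s, t, rfl⟩ := List.append_of_mem he
  obtain ⟨hrot, hrotc⟩ := hes.rotate_of_isClosed hc
  have hdisj : (e :: t ++ s).Disjoint cs := fun a ha hacs ↦ by
    have := hcsS a hacs
    simp only [mem_sdiff, mem_univ, List.mem_toFinset, true_and] at this
    simp only [List.mem_append, List.mem_cons] at ha this
    tauto
  have hhead : G.src ((e :: t ++ s).head (by simp)) = G.src (cs.head hcsne) := by
    rw [← hpre.head (List.cons_ne_nil g [])]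
    exact hsrc.symm
  obtain ⟨hnew, hnewc⟩ := hrot.append_of_isClosed hrotc hcs hcsc hdisj _ hcsne hhead
  refine ⟨e :: t ++ s ++ cs, hnew, hnewc, fun a ha ↦ ?_, ?_⟩
  · simp only [List.mem_append, List.mem_cons] at ha ⊢
    tauto
  · have := List.length_pos_of_ne_nil hcsne
    simp only [List.length_append, List.length_cons]
    omega

theorem IsTrail.exists_eulerian_of_isClosed [Fintype E] (hbal : ∀ v, G.inDeg v = G.outDeg v)
    (hconn : ∀ v w, G.Reach v w) {es : List E} (hes : G.IsTrail es) (hc : G.IsClosed es)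
    (hne : es ≠ []) : ∃ es' : List E, G.IsTrail es' ∧ G.IsClosed es' ∧ ∀ e, e ∈ es' := by
  by_cases hall : ∀ e, e ∈ es
  · exact ⟨es, hes, hc, hall⟩
  push Not at hall
  obtain ⟨es', hes', hc', -, hlen⟩ := hes.exists_longer_of_isClosed hbal hconn hc hne hall
  exact hes'.exists_eulerian_of_isClosed hbal hconn hc' (List.ne_nil_of_length_pos (by omega))
termination_by Fintype.card E - es.length
decreasing_by
  have := hes'.1.length_le_card
  omega

end Degrees

end DiMultigraph

theorem hierholzer_general {V E : Type} [Fintype E] [DecidableEq V]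
    (G : DiMultigraph V E)
    (hbal : ∀ v : V, G.inDeg v = G.outDeg v)
    (hconn : ∀ v w : V, G.Reach v w) :
    (∀ (es : List E) (h : es ≠ []), G.IsTrail es →
        (∀ e : E, e ∉ es → G.src e ≠ G.tgt (es.getLast h)) →
        G.tgt (es.getLast h) = G.src (es.head h)) ∧
    (∀ es : List E, es ≠ [] → G.IsTrail es → G.IsClosed es → (∃ e : E, e ∉ es) →
        ∃ es' : List E, G.IsTrail es' ∧ G.IsClosed es' ∧
          (∀ e ∈ es, e ∈ es') ∧ es.length < es'.length) ∧
    (∃ es : List E, G.IsTrail es ∧ G.IsClosed es ∧ ∀ e : E, e ∈ es) := by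
  classical
  have hmaximal (es : List E) (h : es ≠ []) (hes : G.IsTrail es)
      (hmax : ∀ e, e ∉ es → G.src e ≠ G.tgt (es.getLast h)) :
      G.tgt (es.getLast h) = G.src (es.head h) :=
    hes.tgt_getLast_eq_src_head_of_maximal (DiMultigraph.isBalancedOn_univ hbal)
      (fun e _ ↦ Finset.mem_univ e) h fun e _ ↦ hmax e
  refine ⟨hmaximal, fun es hne hes hc hmiss ↦
    hes.exists_longer_of_isClosed hbal hconn hc hne hmiss, ?_⟩
  rcases isEmpty_or_nonempty E with _ | ⟨⟨e⟩⟩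
  · exact ⟨[], DiMultigraph.isTrail_nil, fun h ↦ absurd rfl h, isEmptyElim⟩
  obtain ⟨cs, hcsne, -, hcs, -, hmax⟩ :=
    (DiMultigraph.isTrail_singleton (G := G) e).exists_maximal_extension (S := Finset.univ)
      (fun f _ ↦ Finset.mem_univ f) (List.cons_ne_nil e [])
  exact hcs.exists_eulerian_of_isClosed hbal hconn
    (fun _ ↦ hmaximal cs hcsne hcs fun f ↦ hmax f (Finset.mem_univ f)) hcsne

/-- Hierholzer's approach succeeds in a connected balanced directed multigraph with at
least one edge: (1) every maximal trail (one that cannot be extended by an unused edge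
leaving its endpoint) ends at its starting vertex; (2) any nonempty closed trail that
does not use all edges can be extended to a strictly longer closed trail containing it
(by splicing in a closed trail through a vertex of the trail incident to an unused
edge); hence (3) an Eulerian circuit exists. -/
theorem hierholzer {V E : Type} [Fintype V] [Fintype E] [DecidableEq V]
    (G : DiMultigraph V E)
    (hbal : ∀ v : V, G.inDeg v = G.outDeg v)
    (hconn : ∀ v w : V, G.Reach v w)
    (hE : Nonempty E) :
    (∀ (es : List E) (h : es ≠ []), G.IsTrail es →
        (∀ e : E, e ∉ es → G.src e ≠ G.tgt (es.getLast h)) →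
        G.tgt (es.getLast h) = G.src (es.head h)) ∧
    (∀ es : List E, es ≠ [] → G.IsTrail es → G.IsClosed es → (∃ e : E, e ∉ es) →
        ∃ es' : List E, G.IsTrail es' ∧ G.IsClosed es' ∧
          (∀ e ∈ es, e ∈ es') ∧ es.length < es'.length) ∧
    (∃ es : List E, G.IsTrail es ∧ G.IsClosed es ∧ ∀ e : E, e ∈ es) :=
  hierholzer_general G hbal hconn
end
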